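/- arXiv:1610.02872 — 3 statements merged into one kernel-verified Lean document; each statement's English description precedes it below -/
import Mathlib

section
/- Let 0 = s₁ < s₂ < ... < sₙ = 1 with gaps Δᵢ = sᵢ - sᵢ₋₁ for i = 2,...,n (so Σᵢ Δᵢ = 1), and define τₙ² = (2/n)·Σ_{i=3}^{n-1} [ (Δ_{i+1}/(Δᵢ + Δ_{i+1}) + Δ_{i-1}/(Δᵢ + Δ_{i-1}))² + 2·ΔᵢΔ_{i+1}/(Δᵢ + Δ_{i+1})² ]. Then for any such configuration with n ≥ 5, τₙ² ≤ 4 + C/n for a universal constant C, and lim sup over any sequence of such designs satisfies lim sup τₙ² ≤ 4. -/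
open Filter

/-!
Write `rᵢ = Δᵢ₊₁ / (Δᵢ + Δᵢ₊₁) ∈ [0, 1]`. The `i`-th summand of `τₙ²` is
`(rᵢ + (1 - rᵢ₋₁))² + 2 rᵢ (1 - rᵢ)`, which falls short of `2 + 2 (rᵢ - rᵢ₋₁)` by
`(1 - rᵢ - rᵢ₋₁)² + 2 rᵢ₋₁ (1 - rᵢ₋₁) ≥ 0`. Summing over `3 ≤ i ≤ n - 1` telescopes to at most
`2 (n - 3) + 2`, so `τₙ² ≤ 4` for every design.
-/

/-- The asymptotic variance `τₙ²` of the cross-validation estimator, as a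
function of the gaps `Δᵢ = sᵢ - sᵢ₋₁` of the design. -/
noncomputable def tau2 (n : ℕ) (Δ : ℕ → ℝ) : ℝ :=
  (2 / (n : ℝ)) * ∑ i ∈ Finset.Icc 3 (n - 1),
    ((Δ (i + 1) / (Δ i + Δ (i + 1)) + Δ (i - 1) / (Δ i + Δ (i - 1))) ^ 2
      + 2 * (Δ i * Δ (i + 1)) / (Δ i + Δ (i + 1)) ^ 2)

theorem Finset.sum_Ioc_sub_pred {M : Type*} [AddCommGroup M] (f : ℕ → M) {m n : ℕ}
    (hmn : m ≤ n) : ∑ i ∈ Finset.Ioc m n, (f i - f (i - 1)) = f n - f m := by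
  induction n, hmn using Nat.le_induction with
  | base => simp
  | succ k hk ih =>
    rw [Finset.sum_Ioc_succ_top (by omega), ih, Nat.add_sub_cancel]
    abel

theorem sq_add_one_sub_add_two_mul_one_sub_le {a b : ℝ} (hb₀ : 0 ≤ b) (hb₁ : b ≤ 1) :
    (a + (1 - b)) ^ 2 + 2 * a * (1 - a) ≤ 2 + 2 * (a - b) := by
  nlinarith [sq_nonneg (1 - a - b), mul_nonneg hb₀ (sub_nonneg.2 hb₁)]

noncomputable def gapRatio (Δ : ℕ → ℝ) (i : ℕ) : ℝ := Δ (i + 1) / (Δ i + Δ (i + 1))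

section gapRatio

variable {Δ : ℕ → ℝ} {i : ℕ}

theorem gapRatio_nonneg (h : 0 ≤ Δ i) (h' : 0 ≤ Δ (i + 1)) : 0 ≤ gapRatio Δ i := by
  unfold gapRatio
  positivity

theorem gapRatio_le_one (h : 0 ≤ Δ i) (h' : 0 ≤ Δ (i + 1)) : gapRatio Δ i ≤ 1 :=
  div_le_one_of_le₀ (by linarith) (by linarith)

theorem one_sub_gapRatio (h : Δ i + Δ (i + 1) ≠ 0) :
    1 - gapRatio Δ i = Δ i / (Δ i + Δ (i + 1)) := by
  unfold gapRatio
  field_simp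
  ring

theorem tau2_summand_eq (hi : 1 ≤ i) (hprev : Δ (i - 1) + Δ i ≠ 0) (hnext : Δ i + Δ (i + 1) ≠ 0) :
    (Δ (i + 1) / (Δ i + Δ (i + 1)) + Δ (i - 1) / (Δ i + Δ (i - 1))) ^ 2
        + 2 * (Δ i * Δ (i + 1)) / (Δ i + Δ (i + 1)) ^ 2
      = (gapRatio Δ i + (1 - gapRatio Δ (i - 1))) ^ 2
        + 2 * gapRatio Δ i * (1 - gapRatio Δ i) := by
  have hprev' : Δ (i - 1) + Δ (i - 1 + 1) ≠ 0 := by rwa [Nat.sub_add_cancel hi]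
  rw [one_sub_gapRatio hprev', one_sub_gapRatio hnext, Nat.sub_add_cancel hi, add_comm (Δ (i - 1))]
  unfold gapRatio
  field_simp

end gapRatio

theorem tau2_nonneg {n : ℕ} {Δ : ℕ → ℝ} (hΔ : ∀ i ∈ Finset.Icc 2 n, 0 ≤ Δ i) :
    0 ≤ tau2 n Δ := by
  refine mul_nonneg (by positivity) (Finset.sum_nonneg fun i hi => ?_)
  obtain ⟨hi₃, hin⟩ := Finset.mem_Icc.1 hi
  have := hΔ i (Finset.mem_Icc.2 ⟨by omega, by omega⟩)
  have := hΔ (i + 1) (Finset.mem_Icc.2 ⟨by omega, by omega⟩)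
  positivity

theorem tau2_le_four {n : ℕ} {Δ : ℕ → ℝ} (hΔ : ∀ i ∈ Finset.Icc 2 n, 0 < Δ i) :
    tau2 n Δ ≤ 4 := by
  rcases Nat.lt_or_ge n 3 with hn | hn
  · simp [tau2, Finset.Icc_eq_empty_of_lt (show n - 1 < 3 by omega)]
  have hpos : ∀ j, 2 ≤ j → j ≤ n → 0 < Δ j := fun j h₂ hj => hΔ j (Finset.mem_Icc.2 ⟨h₂, hj⟩)
  set r := gapRatio Δ
  have hr₀ : ∀ j, 2 ≤ j → j < n → 0 ≤ r j := fun j h₂ hj =>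
    gapRatio_nonneg (hpos j h₂ hj.le).le (hpos (j + 1) (by omega) hj).le
  have hr₁ : ∀ j, 2 ≤ j → j < n → r j ≤ 1 := fun j h₂ hj =>
    gapRatio_le_one (hpos j h₂ hj.le).le (hpos (j + 1) (by omega) hj).le
  have hterm : ∀ i ∈ Finset.Icc 3 (n - 1),
      (Δ (i + 1) / (Δ i + Δ (i + 1)) + Δ (i - 1) / (Δ i + Δ (i - 1))) ^ 2
        + 2 * (Δ i * Δ (i + 1)) / (Δ i + Δ (i + 1)) ^ 2 ≤ 2 + 2 * (r i - r (i - 1)) := by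
    intro i hi
    obtain ⟨hi₃, hin⟩ := Finset.mem_Icc.1 hi
    have hΔprev := hpos (i - 1) (by omega) (by omega)
    have hΔcur := hpos i (by omega) (by omega)
    have hΔnext := hpos (i + 1) (by omega) (by omega)
    rw [tau2_summand_eq (by omega) (by positivity) (by positivity)]
    exact sq_add_one_sub_add_two_mul_one_sub_le (hr₀ _ (by omega) (by omega))
      (hr₁ _ (by omega) (by omega))
  have hsum : ∑ i ∈ Finset.Icc 3 (n - 1), (2 + 2 * (r i - r (i - 1)))
      = 2 * ((n : ℝ) - 3) + 2 * (r (n - 1) - r 2) := by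
    rw [Finset.sum_add_distrib, ← Finset.mul_sum,
      show Finset.Icc 3 (n - 1) = Finset.Ioc 2 (n - 1) from Finset.Icc_succ_left_eq_Ioc 2 _,
      Finset.sum_Ioc_sub_pred r (by omega), Finset.sum_const, Nat.card_Ioc, nsmul_eq_mul,
      Nat.cast_sub (by omega), Nat.cast_sub (by omega)]
    ring
  have hn₀ : (0 : ℝ) < n := by positivity
  calc tau2 n Δ ≤ (2 / n) * (2 * ((n : ℝ) - 3) + 2 * (r (n - 1) - r 2)) := by
        rw [tau2, ← hsum]
        exact mul_le_mul_of_nonneg_left (Finset.sum_le_sum hterm) (by positivity)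
    _ ≤ (2 / n) * (2 * n) := by
        gcongr
        linarith [hr₁ (n - 1) (by omega) (by omega), hr₀ 2 le_rfl (by omega)]
    _ = 4 := by field_simp; ring

theorem limsup_tau2_le_four {Δ : ℕ → ℕ → ℝ}
    (hΔ : ∀ᶠ n in atTop, ∀ i ∈ Finset.Icc 2 n, 0 < Δ n i) :
    limsup (fun n => tau2 n (Δ n)) atTop ≤ 4 := by
  refine limsup_le_of_le ?_ (hΔ.mono fun n hn => tau2_le_four hn)
  exact isCoboundedUnder_le_of_eventually_le atTop
    (hΔ.mono fun n hn => tau2_nonneg fun i hi => (hn i hi).le)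

theorem stmt4 :
    ∃ C : ℝ, 0 < C ∧
      (∀ (n : ℕ) (Δ : ℕ → ℝ), 5 ≤ n → (∀ i ∈ Finset.Icc 2 n, 0 < Δ i) →
        (∑ i ∈ Finset.Icc 2 n, Δ i) = 1 → tau2 n Δ ≤ 4 + C / (n : ℝ)) ∧
      (∀ Δ : ℕ → ℕ → ℝ,
        (∀ n, 5 ≤ n → (∀ i ∈ Finset.Icc 2 n, 0 < Δ n i) ∧ (∑ i ∈ Finset.Icc 2 n, Δ n i) = 1) →
        limsup (fun n => tau2 n (Δ n)) atTop ≤ 4) := by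
  refine ⟨1, one_pos, fun n Δ _ hΔ _ => ?_, fun Δ hΔ => ?_⟩
  · have : (0 : ℝ) ≤ 1 / n := by positivity
    linarith [tau2_le_four hΔ]
  · exact limsup_tau2_le_four (eventually_atTop.2 ⟨5, fun n hn => (hΔ n hn).1⟩)
end

section
/- There exists K > 0 such that for all θ ∈ [a,A] ⊂ (0,∞), σ² ∈ [b,B] ⊂ (0,∞), and Δ ∈ (0,1], the derivative α'(θ) of α(θ) = 1/(σ²(1 − e^{−2θΔ})) with respect to θ satisfies α'(θ) = −2Δe^{−2θΔ}/(σ²(1−e^{−2θΔ})²) and |α'(θ) + 1/(2σ²θ²Δ)| ≤ K. -/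
open Real

lemma expsum (x : ℝ) (h0 : 0 ≤ x) (h1 : x ≤ 1) :
    |Real.exp x + Real.exp (-x) - 2 - x ^ 2| ≤ x ^ 4 := by
  have hx : |x| ≤ 1 := by rwa [abs_of_nonneg h0]
  have hx' : |(-x)| ≤ 1 := by rwa [abs_neg]
  have h4 : (0:ℕ) < 4 := by norm_num
  have b1 := Real.exp_bound hx h4
  have b2 := Real.exp_bound hx' h4
  simp only [Finset.sum_range_succ, Finset.sum_range_zero, Nat.factorial] at b1 b2
  norm_num at b1 b2
  rw [abs_le] at b1 b2 ⊢
  have hax : |x| ^ 4 = x ^ 4 := by rw [abs_of_nonneg h0]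
  rw [hax] at b1
  rw [hax] at b2
  constructor <;> nlinarith [b1.1, b1.2, b2.1, b2.2, pow_nonneg h0 4]

lemma fbound (x : ℝ) (hx : 0 < x) :
    |1 / x ^ 2 - Real.exp (-x) / (1 - Real.exp (-x)) ^ 2| ≤ 5 := by
  set E := Real.exp (-x) with hE
  have hE0 : 0 < E := Real.exp_pos _
  have hE1 : E < 1 := Real.exp_lt_one_iff.mpr (by linarith)
  have hEx : E * Real.exp x = 1 := by rw [hE, ← Real.exp_add]; simp
  rcases le_or_gt x 1 with hx1 | hx1
  · -- small x
    have hEle : E ≤ 1 / (1 + x) := by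
      rw [hE, Real.exp_neg, one_div]
      exact inv_anti₀ (by linarith) (by linarith [Real.add_one_le_exp x])
    have h1mE : x / 2 ≤ 1 - E := by
      have h2 : E * (1 + x) ≤ 1 := (le_div_iff₀ (by linarith : (0:ℝ) < 1 + x)).mp hEle
      nlinarith
    have hden : x ^ 4 / 4 ≤ x ^ 2 * (1 - E) ^ 2 := by
      have h2 : (x / 2) ^ 2 ≤ (1 - E) ^ 2 := by nlinarith
      nlinarith [mul_le_mul_of_nonneg_left h2 (sq_nonneg x)]
    have hE1pos : (0:ℝ) < 1 - E := by linarith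
    have hdenpos : (0:ℝ) < x ^ 2 * (1 - E) ^ 2 :=
      mul_pos (pow_pos hx 2) (pow_pos hE1pos 2)
    have key : 1 / x ^ 2 - E / (1 - E) ^ 2
        = E * (Real.exp x + E - 2 - x ^ 2) / (x ^ 2 * (1 - E) ^ 2) := by
      have hne1 : (1 - E) ≠ 0 := ne_of_gt hE1pos
      have hne2 : x ≠ 0 := ne_of_gt hx
      field_simp
      linear_combination (-1 : ℝ) * hEx
    have hnum : |E * (Real.exp x + E - 2 - x ^ 2)| ≤ x ^ 4 := by
      rw [abs_mul, abs_of_pos hE0]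
      have h := expsum x hx.le hx1
      calc E * |Real.exp x + E - 2 - x ^ 2| ≤ 1 * x ^ 4 := by
            apply mul_le_mul (le_of_lt hE1) _ (abs_nonneg _) zero_le_one
            exact h
        _ = x ^ 4 := one_mul _
    rw [key, abs_div, abs_of_pos hdenpos, div_le_iff₀ hdenpos]
    linarith
  · -- large x
    have hEhalf : E ≤ 1 / 2 := by
      have h1 : E ≤ Real.exp (-1) := Real.exp_le_exp.mpr (by linarith)
      have h2 : Real.exp (-1) ≤ 1 / 2 := by
        rw [Real.exp_neg]
        rw [inv_le_iff_one_le_mul₀ (Real.exp_pos 1)]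
        nlinarith [Real.exp_one_gt_d9]
      linarith
    have hx2 : (1:ℝ) ≤ x ^ 2 := by nlinarith
    have h1 : 0 < 1 - E := by linarith
    have hden : (1/4 : ℝ) ≤ (1 - E) ^ 2 := by nlinarith
    have t1 : 0 < 1 / x ^ 2 := by positivity
    have t2 : 1 / x ^ 2 ≤ 1 := by rw [div_le_one (by positivity)]; linarith
    have t3 : 0 ≤ E / (1 - E) ^ 2 := by positivity
    have t4 : E / (1 - E) ^ 2 ≤ 4 := by
      rw [div_le_iff₀ (by positivity)]; nlinarith
    rw [abs_le]; constructor <;> linarith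

theorem stmt15 (a A b B : ℝ) (ha : 0 < a) (haA : a ≤ A) (hb : 0 < b) (hbB : b ≤ B) :
    ∃ K > (0 : ℝ), ∀ θ ∈ Set.Icc a A, ∀ σ2 ∈ Set.Icc b B, ∀ Δ ∈ Set.Ioc (0 : ℝ) 1,
      HasDerivAt (fun t : ℝ => 1 / (σ2 * (1 - Real.exp (-2 * t * Δ))))
        (-2 * Δ * Real.exp (-2 * θ * Δ) / (σ2 * (1 - Real.exp (-2 * θ * Δ)) ^ 2)) θ ∧
      |(-2 * Δ * Real.exp (-2 * θ * Δ) / (σ2 * (1 - Real.exp (-2 * θ * Δ)) ^ 2))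
          + 1 / (2 * σ2 * θ ^ 2 * Δ)| ≤ K := by
  refine ⟨10 / b, by positivity, fun θ hθm σ2 hσm Δ hΔm => ?_⟩
  obtain ⟨hθa, hθA⟩ := hθm
  obtain ⟨hσb, hσB⟩ := hσm
  obtain ⟨hΔ0, hΔ1⟩ := hΔm
  have hθ : 0 < θ := lt_of_lt_of_le ha hθa
  have hσ : 0 < σ2 := lt_of_lt_of_le hb hσb
  have hxpos : 0 < 2 * θ * Δ := by positivity
  have hlt : Real.exp (-2 * θ * Δ) < 1 := Real.exp_lt_one_iff.mpr (by nlinarith)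
  have hE0 : 0 < Real.exp (-2 * θ * Δ) := Real.exp_pos _
  have h1mE : 0 < 1 - Real.exp (-2 * θ * Δ) := by linarith
  have hne : σ2 * (1 - Real.exp (-2 * θ * Δ)) ≠ 0 := ne_of_gt (mul_pos hσ h1mE)
  constructor
  · -- derivative
    have d1 : HasDerivAt (fun t : ℝ => -2 * t * Δ) (-2 * Δ) θ := by
      simpa using ((hasDerivAt_id θ).const_mul (-2 : ℝ)).mul_const Δ
    have d5 := (((d1.exp).const_sub 1).const_mul σ2).inv hne
    have hfun : (fun t : ℝ => 1 / (σ2 * (1 - Real.exp (-2 * t * Δ))))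
        = fun t : ℝ => (σ2 * (1 - Real.exp (-2 * t * Δ)))⁻¹ := by
      funext t; rw [one_div]
    rw [hfun]
    refine d5.congr_deriv (Eq.symm ?_)
    have hne1 : σ2 * (1 - Real.exp (-2 * θ * Δ)) ^ 2 ≠ 0 :=
      ne_of_gt (mul_pos hσ (pow_pos h1mE 2))
    have hne2 : (σ2 * (1 - Real.exp (-2 * θ * Δ))) ^ 2 ≠ 0 :=
      pow_ne_zero 2 hne
    exact (div_eq_div_iff hne1 hne2).mpr (by ring)
  · -- bound
    have hxE : Real.exp (-2 * θ * Δ) = Real.exp (-(2 * θ * Δ)) := by ring_nf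
    have hf := fbound (2 * θ * Δ) hxpos
    have heq : (-2 * Δ * Real.exp (-2 * θ * Δ) / (σ2 * (1 - Real.exp (-2 * θ * Δ)) ^ 2))
          + 1 / (2 * σ2 * θ ^ 2 * Δ)
        = (2 * Δ / σ2) * (1 / (2 * θ * Δ) ^ 2
            - Real.exp (-(2 * θ * Δ)) / (1 - Real.exp (-(2 * θ * Δ))) ^ 2) := by
      rw [← hxE]
      have h1 : (1 - Real.exp (-2 * θ * Δ)) ≠ 0 := ne_of_gt h1mE
      have hd1 : σ2 * (1 - Real.exp (-2 * θ * Δ)) ^ 2 ≠ 0 :=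
        ne_of_gt (mul_pos hσ (pow_pos h1mE 2))
      have hd2 : 2 * σ2 * θ ^ 2 * Δ ≠ 0 := by positivity
      have hd3 : σ2 * (2 * θ * Δ) ^ 2 ≠ 0 := by positivity
      have e2 : 1 / (2 * σ2 * θ ^ 2 * Δ) = (2 * Δ / σ2) * (1 / (2 * θ * Δ) ^ 2) := by
        rw [div_mul_div_comm]
        exact (div_eq_div_iff hd2 hd3).mpr (by ring)
      have e3 : -2 * Δ * Real.exp (-2 * θ * Δ) / (σ2 * (1 - Real.exp (-2 * θ * Δ)) ^ 2)
          = -((2 * Δ / σ2) * (Real.exp (-2 * θ * Δ) / (1 - Real.exp (-2 * θ * Δ)) ^ 2)) := by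
        rw [div_mul_div_comm, ← neg_div]
        exact (div_eq_div_iff hd1 hd1).mpr (by ring)
      rw [mul_sub]
      linarith [e2, e3]
    rw [heq, abs_mul]
    have h1 : |2 * Δ / σ2| ≤ 2 / b := by
      rw [abs_of_pos (by positivity)]
      exact div_le_div₀ (by norm_num) (by linarith) hb hσb
    calc |2 * Δ / σ2| * |1 / (2 * θ * Δ) ^ 2
            - Real.exp (-(2 * θ * Δ)) / (1 - Real.exp (-(2 * θ * Δ))) ^ 2|
        ≤ (2 / b) * 5 := mul_le_mul h1 hf (abs_nonneg _) (by positivity)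
      _ = 10 / b := by ring
end

section
/- Let αᵢ = 1/(σ²(1 − e^{−2θΔᵢ})) and Aᵢ = αᵢ + α_{i+1}e^{−2θΔ_{i+1}}. There exists K > 0 such that for all θ ∈ [a,A] ⊂ (0,∞), σ² ∈ [b,B] ⊂ (0,∞), and all Δᵢ, Δ_{i+1} ∈ (0,1], |Aᵢ − (1/(2σ²θ))(1/Δᵢ + 1/Δ_{i+1})| ≤ K. -/
/-!
Since `q / (1 - q) = 1 / (1 - q) - 1`, the difference to be bounded is `σ²⁻¹ (g x + g y - 1)` with
`x = 2θΔᵢ`, `y = 2θΔᵢ₊₁` and `g x = 1 / (1 - e⁻ˣ) - 1 / x`. Both inequalities `0 ≤ g x ≤ 1` for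
`x > 0` come from `t + 1 ≤ eᵗ`, at `t = -x` and `t = x`, so the difference is at most `1 / b`.
-/

open Real Set

lemma one_div_one_sub_exp_neg_sub_one_div_mem_Icc {x : ℝ} (hx : 0 < x) :
    1 / (1 - exp (-x)) - 1 / x ∈ Icc 0 1 := by
  have hpos : 0 < 1 - exp (-x) := by
    rw [sub_pos, exp_lt_one_iff]
    linarith
  have hle : 1 - exp (-x) ≤ x := by linarith [add_one_le_exp (-x)]
  have hmul : (x + 1) * exp (-x) ≤ 1 := by
    calc (x + 1) * exp (-x) ≤ exp x * exp (-x) := by gcongr; exact add_one_le_exp x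
      _ = 1 := by rw [← exp_add, add_neg_cancel, exp_zero]
  have hupper : 1 / (1 - exp (-x)) ≤ (x + 1) / x := by
    rw [div_le_div_iff₀ hpos hx]
    linarith
  rw [add_div, div_self hx.ne'] at hupper
  exact ⟨sub_nonneg.2 (one_div_le_one_div_of_le hpos hle), by linarith⟩

lemma A_sub_principal_part_eq {s p q θ d e : ℝ} (hq : q ≠ 1) :
    1 / (s * (1 - p)) + 1 / (s * (1 - q)) * q - 1 / (2 * s * θ) * (1 / d + 1 / e)
      = 1 / s * ((1 / (1 - p) - 1 / (2 * θ * d)) + (1 / (1 - q) - 1 / (2 * θ * e)) - 1) := by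
  have : 1 - q ≠ 0 := sub_ne_zero.2 hq.symm
  field_simp
  ring

theorem stmt16_general (a A b B : ℝ) (ha : 0 < a) (hb : 0 < b) :
    ∃ K > (0 : ℝ), ∀ θ ∈ Set.Icc a A, ∀ σ2 ∈ Set.Icc b B,
      ∀ Δi ∈ Set.Ioc (0 : ℝ) 1, ∀ Δip1 ∈ Set.Ioc (0 : ℝ) 1,
      |(1 / (σ2 * (1 - Real.exp (-2 * θ * Δi)))
          + (1 / (σ2 * (1 - Real.exp (-2 * θ * Δip1)))) * Real.exp (-2 * θ * Δip1))
        - (1 / (2 * σ2 * θ)) * (1 / Δi + 1 / Δip1)| ≤ K := by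
  refine ⟨1 / b, by positivity, ?_⟩
  rintro θ ⟨haθ, -⟩ σ2 ⟨hbσ, -⟩ Δi ⟨hΔi, -⟩ Δip1 ⟨hΔip1, -⟩
  have hθ : 0 < θ := ha.trans_le haθ
  have hσ : 0 < σ2 := hb.trans_le hbσ
  have hx : 0 < 2 * θ * Δi := by positivity
  have hy : 0 < 2 * θ * Δip1 := by positivity
  have hq : exp (-(2 * θ * Δip1)) ≠ 1 := (exp_lt_one_iff.2 (neg_neg_of_pos hy)).ne
  obtain ⟨hx₀, hx₁⟩ := one_div_one_sub_exp_neg_sub_one_div_mem_Icc hx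
  obtain ⟨hy₀, hy₁⟩ := one_div_one_sub_exp_neg_sub_one_div_mem_Icc hy
  simp only [neg_mul]
  rw [A_sub_principal_part_eq hq, abs_mul, abs_of_pos (one_div_pos.2 hσ)]
  calc 1 / σ2 * |_| ≤ 1 / σ2 * 1 := by gcongr; exact abs_le.2 ⟨by linarith, by linarith⟩
    _ ≤ 1 / b := by rw [mul_one]; exact one_div_le_one_div_of_le hb hbσ

theorem stmt16 (a A b B : ℝ) (ha : 0 < a) (haA : a ≤ A) (hb : 0 < b) (hbB : b ≤ B) :
    ∃ K > (0 : ℝ), ∀ θ ∈ Set.Icc a A, ∀ σ2 ∈ Set.Icc b B,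
      ∀ Δi ∈ Set.Ioc (0 : ℝ) 1, ∀ Δip1 ∈ Set.Ioc (0 : ℝ) 1,
      |(1 / (σ2 * (1 - Real.exp (-2 * θ * Δi)))
          + (1 / (σ2 * (1 - Real.exp (-2 * θ * Δip1)))) * Real.exp (-2 * θ * Δip1))
        - (1 / (2 * σ2 * θ)) * (1 / Δi + 1 / Δip1)| ≤ K :=
  stmt16_general a A b B ha hb
end
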